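/- arXiv:2110.05349 — 6 statements merged into one kernel-verified Lean document; each statement's English description precedes it below -/
import Mathlib

section
/- For any r ≥ 2, if an r-graph H is positive, then its Levi graph L(H) is a positive graph. (In particular, for every bounded measurable symmetric f:[0,1]²→ℝ, one has t_{L(H)}(f) = t_H(h), where h(x₁,…,x_r) := ∫ f(x₁,y) f(x₂,y) ⋯ f(x_r,y) dy.) -/
open MeasureTheory
open scoped Classical

noncomputable section

/-- Homomorphism density of a symmetric kernel `f` in a finite simple graph `G`:
`t_G(f) = ∫ ∏_{{u,v} ∈ E(G)} f(x_u, x_v) dx`, with respect to Lebesgue measure on `[0,1]`. -/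
def graphDensity {V : Type} [Fintype V] (G : SimpleGraph V)
    (f : unitInterval → unitInterval → ℝ) (hf : ∀ a b, f a b = f b a) : ℝ :=
  ∫ x : V → unitInterval,
    ∏ e ∈ G.edgeFinset,
      Sym2.lift ⟨fun u v => f (x u) (x v), fun u v => hf (x u) (x v)⟩ e

/-- A finite simple graph is positive if `t_G(f) ≥ 0` for every bounded measurable
symmetric kernel `f : [0,1]² → ℝ`. -/
def GraphPositive {V : Type} [Fintype V] (G : SimpleGraph V) : Prop :=
  ∀ (f : unitInterval → unitInterval → ℝ) (hf : ∀ a b, f a b = f b a),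
    Measurable (fun p : unitInterval × unitInterval => f p.1 p.2) →
    (∃ C, ∀ a b, |f a b| ≤ C) →
    0 ≤ graphDensity G f hf

end
/-- Homomorphism density of a symmetric `r`-variable kernel in an `r`-graph whose
edges are indexed by `E` and given as (injective) `r`-tuples of vertices:
`t_H(f) = ∫ ∏_{e ∈ E(H)} f(x_{e 0}, …, x_{e (r-1)}) dx`. -/
noncomputable def hypDensity {V E : Type} [Fintype V] [Fintype E] (r : ℕ)
    (edge : E → Fin r → V) (f : (Fin r → unitInterval) → ℝ) : ℝ :=
  ∫ x : V → unitInterval, ∏ e : E, f (fun i => x (edge e i))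

/-- An `r`-graph is positive if `t_H(f) ≥ 0` for every bounded measurable
symmetric kernel `f : [0,1]^r → ℝ`. -/
def HypPositive {V E : Type} [Fintype V] [Fintype E] (r : ℕ)
    (edge : E → Fin r → V) : Prop :=
  ∀ f : (Fin r → unitInterval) → ℝ,
    (∀ (σ : Equiv.Perm (Fin r)) (v : Fin r → unitInterval), f (v ∘ σ) = f v) →
    Measurable f → (∃ C, ∀ v, |f v| ≤ C) →
    0 ≤ hypDensity r edge f

/-- The vertex set of an edge of an `r`-graph. -/
noncomputable def hedgeSet {V E : Type} [Fintype V] (r : ℕ) (edge : E → Fin r → V) (e : E) :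
    Finset V :=
  Finset.image (edge e) Finset.univ
/-- The Levi (incidence) graph of an `r`-graph: the bipartite graph with parts
`V` and `E`, where `v` and `e` are adjacent iff `v` is incident to `e`. -/
def Levi {V E : Type} (r : ℕ) (edge : E → Fin r → V) : SimpleGraph (V ⊕ E) :=
  SimpleGraph.fromRel (fun a b => ∃ v e, a = Sum.inl v ∧ b = Sum.inr e ∧ ∃ i, edge e i = v)

/-!
Every Levi edge joins a vertex variable `x_v` to an edge variable `y_e`, and `y_e` occurs in
exactly the `r` Levi edges `{e i, e}` (distinct because `e` is injective). Integrating out the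
edge variables first (Fubini) turns `t_{L(H)}(f)` into `t_H(h)` with
`h(x₁, …, x_r) = ∫ f(x₁, y) ⋯ f(x_r, y) dy`, a bounded, measurable, symmetric kernel, to which
positivity of `H` applies.
-/

lemma Finset.abs_prod_le_pow_card {ι : Type*} (s : Finset ι) (g : ι → ℝ) {C : ℝ}
    (hC : ∀ i ∈ s, |g i| ≤ C) : |∏ i ∈ s, g i| ≤ C ^ s.card := by
  rw [Finset.abs_prod, ← Finset.prod_const]
  exact Finset.prod_le_prod (fun _ _ => abs_nonneg _) hC

section Levi

variable {V E : Type} {r : ℕ}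

def leviIncidence (edge : E → Fin r → V) (p : E × Fin r) : Sym2 (V ⊕ E) :=
  s(Sum.inl (edge p.1 p.2), Sum.inr p.1)

lemma leviIncidence_injective (edge : E → Fin r → V) (hinj : ∀ e, Function.Injective (edge e)) :
    Function.Injective (leviIncidence edge) := by
  rintro ⟨e, i⟩ ⟨e', i'⟩ h
  rcases Sym2.eq_iff.mp h with ⟨hv, he⟩ | ⟨hv, -⟩
  · obtain rfl : e = e' := Sum.inr.inj he
    exact Prod.ext rfl (hinj e (Sum.inl.inj hv))
  · exact Sum.inl_ne_inr hv |>.elim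

lemma levi_edgeFinset [Fintype V] [Fintype E] (edge : E → Fin r → V) :
    (Levi r edge).edgeFinset = Finset.univ.image (leviIncidence edge) := by
  ext s
  induction s using Sym2.ind with
  | _ a b =>
    rw [SimpleGraph.mem_edgeFinset]
    simp only [SimpleGraph.mem_edgeSet, Levi, SimpleGraph.fromRel_adj, Finset.mem_image, Finset.mem_univ, true_and, Prod.exists,
      leviIncidence]
    constructor
    · rintro ⟨-, ⟨v, e, rfl, rfl, i, rfl⟩ | ⟨v, e, rfl, rfl, i, rfl⟩⟩
      · exact ⟨e, i, rfl⟩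
      · exact ⟨e, i, Sym2.eq_swap⟩
    · rintro ⟨e, i, h⟩
      rcases Sym2.eq_iff.mp h with ⟨rfl, rfl⟩ | ⟨rfl, rfl⟩
      · exact ⟨Sum.inl_ne_inr, Or.inl ⟨_, _, rfl, rfl, i, rfl⟩⟩
      · exact ⟨Sum.inr_ne_inl, Or.inr ⟨_, _, rfl, rfl, i, rfl⟩⟩

lemma graphDensity_levi [Fintype V] [Fintype E] (edge : E → Fin r → V)
    (hinj : ∀ e, Function.Injective (edge e))
    (f : unitInterval → unitInterval → ℝ) (hf : ∀ a b, f a b = f b a) :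
    graphDensity (Levi r edge) f hf =
      ∫ x : V ⊕ E → unitInterval, ∏ e : E, ∏ i : Fin r, f (x (.inl (edge e i))) (x (.inr e)) := by
  unfold graphDensity
  congr 1 with x
  rw [levi_edgeFinset, Finset.prod_image fun p _ q _ h => leviIncidence_injective edge hinj h,
    Fintype.prod_prod_type]
  rfl

end Levi

lemma integral_sumPi_prod_eq {V E X : Type*} [Fintype V] [Fintype E] [MeasureSpace X]
    [SigmaFinite (volume : Measure X)] (g : E → (V → X) → X → ℝ)
    (hg : Integrable fun z : (V → X) × (E → X) => ∏ e, g e z.1 (z.2 e)) :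
    ∫ x : V ⊕ E → X, ∏ e, g e (fun v => x (.inl v)) (x (.inr e)) =
      ∫ x : V → X, ∏ e, ∫ y, g e x y := by
  rw [← (volume_measurePreserving_sumPiEquivProdPi_symm fun _ : V ⊕ E => X).integral_comp',
    Measure.volume_eq_prod]
  rw [Measure.volume_eq_prod] at hg
  exact (integral_prod _ hg).trans
    (integral_congr_ae (.of_forall fun x => integral_fintype_prod_eq_prod (g · x)))

noncomputable def commonNbhdKernel {r : ℕ} (f : unitInterval → unitInterval → ℝ)
    (v : Fin r → unitInterval) : ℝ :=
  ∫ y, ∏ i, f (v i) y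

section CommonNbhdKernel

variable {r : ℕ} {f : unitInterval → unitInterval → ℝ}

lemma commonNbhdKernel_comp_perm (σ : Equiv.Perm (Fin r)) (v : Fin r → unitInterval) :
    commonNbhdKernel f (v ∘ σ) = commonNbhdKernel f v :=
  integral_congr_ae (.of_forall fun y => Equiv.prod_comp σ fun i => f (v i) y)

lemma abs_commonNbhdKernel_le {C : ℝ} (hC : ∀ a b, |f a b| ≤ C) (v : Fin r → unitInterval) :
    |commonNbhdKernel f v| ≤ C ^ r := by
  rw [← Real.norm_eq_abs]
  calc ‖commonNbhdKernel f v‖ ≤ C ^ r * volume.real (Set.univ : Set unitInterval) :=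
        norm_integral_le_of_norm_le_const <| .of_forall fun y => by
          rw [Real.norm_eq_abs]
          simpa using Finset.abs_prod_le_pow_card Finset.univ (fun i => f (v i) y)
            fun i _ => hC (v i) y
    _ = C ^ r := by simp

lemma measurable_commonNbhdKernel
    (hmeas : Measurable fun p : unitInterval × unitInterval => f p.1 p.2) :
    Measurable (commonNbhdKernel (r := r) f) := by
  have hprod : Measurable fun p : (Fin r → unitInterval) × unitInterval =>
      ∏ i, f (p.1 i) p.2 :=
    Finset.measurable_prod _ fun i _ =>
      hmeas.comp (f := fun p : (Fin r → unitInterval) × unitInterval => (p.1 i, p.2)) (by fun_prop)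
  exact hprod.stronglyMeasurable.integral_prod_right'.measurable

end CommonNbhdKernel

lemma graphDensity_levi_eq_hypDensity {V E : Type} [Fintype V] [Fintype E] {r : ℕ}
    (edge : E → Fin r → V) (hinj : ∀ e, Function.Injective (edge e))
    (f : unitInterval → unitInterval → ℝ) (hf : ∀ a b, f a b = f b a)
    (hmeas : Measurable fun p : unitInterval × unitInterval => f p.1 p.2)
    {C : ℝ} (hC : ∀ a b, |f a b| ≤ C) :
    graphDensity (Levi r edge) f hf = hypDensity r edge (commonNbhdKernel f) := by
  rw [graphDensity_levi edge hinj]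
  refine integral_sumPi_prod_eq (fun e x y => ∏ i, f (x (edge e i)) y) ?_
  refine .of_bound ?_ ((C ^ r) ^ Fintype.card E) (.of_forall fun z => ?_)
  · refine (Finset.measurable_prod _ fun e _ => Finset.measurable_prod _ fun i _ => ?_)
      |>.aestronglyMeasurable
    exact hmeas.comp
      (f := fun z : (V → unitInterval) × (E → unitInterval) => (z.1 (edge e i), z.2 e))
      (by fun_prop)
  · rw [Real.norm_eq_abs, ← Finset.card_univ]
    refine Finset.abs_prod_le_pow_card _ _ fun e _ => ?_
    simpa using Finset.abs_prod_le_pow_card Finset.univ _ fun i _ => hC (z.1 (edge e i)) (z.2 e)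

theorem levi_positive_of_hypergraph_positive_general
    {V E : Type} [Fintype V] [Fintype E] (r : ℕ)
    (edge : E → Fin r → V) (hinj : ∀ e, Function.Injective (edge e)) :
    (HypPositive r edge → GraphPositive (Levi r edge)) ∧
    (∀ (f : unitInterval → unitInterval → ℝ) (hf : ∀ a b, f a b = f b a),
      Measurable (fun p : unitInterval × unitInterval => f p.1 p.2) →
      (∃ C, ∀ a b, |f a b| ≤ C) →
      graphDensity (Levi r edge) f hf =
        hypDensity r edge (fun v => ∫ y : unitInterval, ∏ i : Fin r, f (v i) y)) := by
  refine ⟨fun hH f hf hmeas ⟨C, hC⟩ => ?_, fun f hf hmeas ⟨C, hC⟩ =>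
    graphDensity_levi_eq_hypDensity edge hinj f hf hmeas hC⟩
  rw [graphDensity_levi_eq_hypDensity edge hinj f hf hmeas hC]
  exact hH _ commonNbhdKernel_comp_perm (measurable_commonNbhdKernel hmeas)
    ⟨C ^ r, abs_commonNbhdKernel_le hC⟩

/-- For `r ≥ 2`, if an `r`-graph `H` is positive then its Levi graph is positive;
in particular, for every bounded measurable symmetric `f : [0,1]² → ℝ`,
`t_{L(H)}(f) = t_H(h)` where `h(x₁,…,x_r) = ∫ f(x₁,y) f(x₂,y) ⋯ f(x_r,y) dy`. -/
theorem levi_positive_of_hypergraph_positive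
    {V E : Type} [Fintype V] [Fintype E] (r : ℕ) (hr : 2 ≤ r)
    (edge : E → Fin r → V) (hinj : ∀ e, Function.Injective (edge e)) :
    (HypPositive r edge → GraphPositive (Levi r edge)) ∧
    (∀ (f : unitInterval → unitInterval → ℝ) (hf : ∀ a b, f a b = f b a),
      Measurable (fun p : unitInterval × unitInterval => f p.1 p.2) →
      (∃ C, ∀ a b, |f a b| ≤ C) →
      graphDensity (Levi r edge) f hf =
        hypDensity r edge (fun v => ∫ y : unitInterval, ∏ i : Fin r, f (v i) y)) :=
  levi_positive_of_hypergraph_positive_general r edge hinj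
end

section
/- An r-graph that has an odd edge is not positive. -/
/-! Cut `[0,1]` into `|V|` pieces `p⁻¹ {v}` of positive measure and take
`f(x₁, …, x_r) = s(p x₁, …, p x_r)`, where `s` is `-1` on the vertex set of the odd edge `e₀`,
`1` on the vertex sets of the other edges and `0` elsewhere. At `x ∈ [0,1]^V` the integrand
of `t_H(f)` is `∏ₑ s(φ ∘ e)` with `φ = p ∘ x`. It vanishes unless `φ` is an endomorphism, and
then exactly one edge is mapped onto `e₀` because `e₀` is odd, so the product is `-1`. Hence the
integrand is `≤ 0` everywhere and equals `-1` on the positive-measure set `{x | p ∘ x = id}`,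
which forces `t_H(f) < 0`. When `V` is empty the odd edge is the only edge and `f = -1` works. -/

open MeasureTheory
open scoped Classical

/-- `g : V → V` is an endomorphism of the `r`-graph with edges `edge`:
it maps vertices to vertices so that (the vertex set of) every edge is mapped
onto (the vertex set of) an edge. -/
def IsHypEndo {V E : Type} [Fintype V] (r : ℕ) (edge : E → Fin r → V) (g : V → V) : Prop :=
  ∀ e : E, ∃ e' : E, Finset.image g (hedgeSet r edge e) = hedgeSet r edge e'

/-- An edge `e` of an `r`-graph is odd if for every endomorphism `π` of the graph,
`e` is the image of exactly one edge. -/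
def OddEdge {V E : Type} [Fintype V] (r : ℕ) (edge : E → Fin r → V) (e : E) : Prop :=
  ∀ g : V → V, IsHypEndo r edge g →
    ∃! e' : E, Finset.image g (hedgeSet r edge e') = hedgeSet r edge e

section

open scoped unitInterval

lemma unitInterval.exists_measurable_fiber_volume_pos (V : Type) [MeasurableSpace V] [Finite V]
    [Nonempty V] :
    ∃ p : I → V, Measurable p ∧ ∀ v, 0 < volume (p ⁻¹' {v}) := by
  obtain ⟨n, ⟨ι⟩⟩ := Finite.exists_equiv_fin V
  have hn : 0 < (n : ℝ) := by exact_mod_cast Fin.pos (ι (Classical.arbitrary V))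
  have : NeZero n := ⟨by exact_mod_cast hn.ne'⟩
  -- `Fin.ofNat` reduces modulo `n`, which only matters at `t = 1`.
  set slice : I → Fin n := fun t => Fin.ofNat n ⌊(t : ℝ) * n⌋₊
  have hslice : Measurable slice := by fun_prop
  have hfiber : ∀ v, (ι.symm ∘ slice) ⁻¹' {v} = slice ⁻¹' {ι v} := fun v => by
    ext t; simp [Equiv.symm_apply_eq]
  refine ⟨ι.symm ∘ slice, measurable_to_countable' fun v => ?_, fun v => ?_⟩
  · rw [hfiber]; exact hslice (measurableSet_singleton _)
  set k : ℕ := (ι v : ℕ)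
  have hk : (k : ℝ) + 1 ≤ n := by exact_mod_cast (ι v).isLt
  let a : I := ⟨k / n, div_mem k.cast_nonneg hn.le (by linarith)⟩
  let b : I := ⟨(k + 1) / n, div_mem (by positivity) hn.le hk⟩
  have hab : Set.Ico a b ⊆ (ι.symm ∘ slice) ⁻¹' {v} := by
    intro t ⟨hat, htb⟩
    have hfloor : ⌊(t : ℝ) * n⌋₊ = k := by
      rw [Nat.floor_eq_iff (mul_nonneg t.2.1 hn.le), ← div_le_iff₀ hn, ← lt_div_iff₀ hn]
      exact ⟨hat, htb⟩
    rw [hfiber, Set.mem_preimage, Set.mem_singleton_iff]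
    ext
    simp [slice, hfloor, k]
  calc (0 : ENNReal) < ENNReal.ofReal ((b : ℝ) - a) := by
        simp only [a, b, ENNReal.ofReal_pos, sub_pos]
        gcongr
        linarith
    _ = volume (Set.Ico a b) := (volume_Ico a b).symm
    _ ≤ _ := measure_mono hab

theorem hypDensity_comp_neg {V E : Type} [Fintype V] [Fintype E] [MeasurableSpace V]
    [MeasurableSingletonClass V] (r : ℕ) (edge : E → Fin r → V)
    (G : (Fin r → V) → ℝ) (hG : ∀ φ : V → V, ∏ e, G (φ ∘ edge e) ≤ 0)
    (hG_id : ∏ e, G (edge e) < 0) {p : I → V} (hp : Measurable p)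
    (hp_pos : ∀ v, 0 < volume (p ⁻¹' {v})) :
    hypDensity r edge (fun y => G (p ∘ y)) < 0 := by
  set H : (V → V) → ℝ := fun φ => ∏ e, G (φ ∘ edge e)
  have hP : Measurable fun x : V → I => p ∘ x := by fun_prop
  have hmeas : Measurable fun x : V → I => H (p ∘ x) := (measurable_of_countable H).comp hP
  obtain ⟨C, hC⟩ := Finite.exists_le fun φ => ‖H φ‖
  have hint : Integrable (fun x : V → I => H (p ∘ x)) :=
    .of_bound hmeas.aestronglyMeasurable C (ae_of_all _ fun x => hC _)
  set S : Set (V → I) := Set.univ.pi fun v => p ⁻¹' {v}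
  have hS : S ⊆ Function.support fun x => -H (p ∘ x) := by
    intro x hx
    have : p ∘ x = id := funext fun v => hx v (Set.mem_univ v)
    simp only [Function.mem_support, this, neg_ne_zero]
    exact hG_id.ne
  have hS_pos : 0 < volume S := by
    rw [volume_pi_pi]
    exact CanonicallyOrderedAdd.prod_pos.mpr fun v _ => hp_pos v
  have : 0 < ∫ x, -H (p ∘ x) :=
    (integral_pos_iff_support_of_nonneg (fun x => neg_nonneg.mpr (hG _)) hint.neg).mpr
      (hS_pos.trans_le (measure_mono hS))
  rw [integral_neg] at this
  exact neg_pos.mp this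

end

theorem not_hypPositive_of_prod_nonpos {V E : Type} [Fintype V] [Fintype E] [Nonempty V]
    (r : ℕ) (edge : E → Fin r → V) (G : (Fin r → V) → ℝ)
    (hG_symm : ∀ (σ : Equiv.Perm (Fin r)) (y : Fin r → V), G (y ∘ σ) = G y)
    (hG : ∀ φ : V → V, ∏ e, G (φ ∘ edge e) ≤ 0) (hG_id : ∏ e, G (edge e) < 0) :
    ¬ HypPositive r edge := by
  let : MeasurableSpace V := ⊤
  obtain ⟨p, hp, hp_pos⟩ := unitInterval.exists_measurable_fiber_volume_pos V
  obtain ⟨C, hC⟩ := Finite.exists_le fun y => |G y|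
  intro hpos
  have := hpos (fun y => G (p ∘ y)) (fun σ y => hG_symm σ (p ∘ y))
    ((measurable_of_countable G).comp (by fun_prop)) ⟨C, fun y => hC _⟩
  exact this.not_gt (hypDensity_comp_neg r edge G hG hG_id hp hp_pos)

section OddEdge

variable {V E : Type} [Fintype V] {r : ℕ} {edge : E → Fin r → V}

lemma image_hedgeSet (φ : V → V) (e : E) :
    Finset.image φ (hedgeSet r edge e) = Finset.image (φ ∘ edge e) Finset.univ :=
  Finset.image_image

lemma isHypEndo_id : IsHypEndo r edge id :=
  fun e => ⟨e, Finset.image_id⟩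

lemma eq_of_hedgeSet_eq_of_oddEdge {e₀ e : E} (hodd : OddEdge r edge e₀)
    (he : hedgeSet r edge e = hedgeSet r edge e₀) : e = e₀ := by
  obtain ⟨_, -, huniq⟩ := hodd id isHypEndo_id
  exact (huniq e (by simpa using he)).trans (huniq e₀ Finset.image_id).symm

variable (r edge) in
noncomputable def oddEdgeSign (e₀ : E) (y : Fin r → V) : ℝ :=
  if Finset.image y Finset.univ = hedgeSet r edge e₀ then -1
  else if ∃ e, Finset.image y Finset.univ = hedgeSet r edge e then 1 else 0

lemma oddEdgeSign_comp_perm (e₀ : E) (σ : Equiv.Perm (Fin r)) (y : Fin r → V) :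
    oddEdgeSign r edge e₀ (y ∘ σ) = oddEdgeSign r edge e₀ y := by
  rw [oddEdgeSign, oddEdgeSign, ← Finset.image_image, Finset.image_univ_equiv]

variable [Fintype E]

lemma prod_oddEdgeSign_of_isHypEndo {e₀ : E} (hodd : OddEdge r edge e₀) {φ : V → V}
    (hφ : IsHypEndo r edge φ) : ∏ e, oddEdgeSign r edge e₀ (φ ∘ edge e) = -1 := by
  obtain ⟨e₁, he₁, huniq⟩ := hodd φ hφ
  rw [Finset.prod_eq_single e₁ (fun e _ he => ?_) (by simp), oddEdgeSign,
    ← image_hedgeSet, if_pos he₁]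
  obtain ⟨e', he'⟩ := hφ e
  rw [oddEdgeSign, ← image_hedgeSet, if_neg (he ∘ huniq e), if_pos ⟨e', he'⟩]

lemma isHypEndo_of_prod_oddEdgeSign_ne_zero (e₀ : E) {φ : V → V}
    (h : ∏ e, oddEdgeSign r edge e₀ (φ ∘ edge e) ≠ 0) : IsHypEndo r edge φ := by
  intro e
  have he := Finset.prod_ne_zero_iff.mp h e (Finset.mem_univ e)
  rw [image_hedgeSet]
  by_contra! hne
  exact he (by rw [oddEdgeSign, if_neg (hne e₀), if_neg (not_exists.mpr hne)])

lemma prod_oddEdgeSign_nonpos {e₀ : E} (hodd : OddEdge r edge e₀) (φ : V → V) :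
    ∏ e, oddEdgeSign r edge e₀ (φ ∘ edge e) ≤ 0 := by
  by_cases h : ∏ e, oddEdgeSign r edge e₀ (φ ∘ edge e) = 0
  · exact h.le
  · rw [prod_oddEdgeSign_of_isHypEndo hodd (isHypEndo_of_prod_oddEdgeSign_ne_zero e₀ h)]
    norm_num

lemma not_hypPositive_of_isEmpty [IsEmpty V] {e₀ : E} (hodd : OddEdge r edge e₀) :
    ¬ HypPositive r edge := by
  have hcard : Fintype.card E = 1 := Fintype.card_eq_one_iff.mpr
    ⟨e₀, fun e => eq_of_hedgeSet_eq_of_oddEdge hodd (Subsingleton.elim _ _)⟩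
  intro hpos
  have := hpos (fun _ => -1) (fun _ _ => rfl) measurable_const ⟨1, fun _ => by norm_num⟩
  norm_num [hypDensity, hcard] at this

end OddEdge

theorem not_positive_of_oddEdge_general
    {V E : Type} [Fintype V] [Fintype E] (r : ℕ)
    (edge : E → Fin r → V)
    (e₀ : E) (hodd : OddEdge r edge e₀) :
    ¬ HypPositive r edge := by
  cases isEmpty_or_nonempty V
  · exact not_hypPositive_of_isEmpty hodd
  · exact not_hypPositive_of_prod_nonpos r edge (oddEdgeSign r edge e₀)
      (oddEdgeSign_comp_perm e₀) (prod_oddEdgeSign_nonpos hodd)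
      ((prod_oddEdgeSign_of_isHypEndo hodd isHypEndo_id).trans_lt (by norm_num))

/-- **Proposition 3.** An `r`-graph that has an odd edge is not positive. -/
theorem not_positive_of_oddEdge
    {V E : Type} [Fintype V] [Fintype E] (r : ℕ)
    (edge : E → Fin r → V) (hinj : ∀ e, Function.Injective (edge e))
    (e₀ : E) (hodd : OddEdge r edge e₀) :
    ¬ HypPositive r edge :=
  not_positive_of_oddEdge_general r edge e₀ hodd
end

section
/- If every pair of vertices of an r-graph H is contained in at least one edge, then every endomorphism of H is an automorphism, and consequently every edge of H is odd. -/
/-!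
An endomorphism maps every edge onto an edge, and all edges have exactly `r` vertices, so it is
injective on every edge. Since every pair of vertices lies in a common edge, it is injective, hence
bijective on the finite vertex set. An injective endomorphism induces an injective, hence bijective,
map on the finite edge set of a simple `r`-graph, so every edge is the image of exactly one edge.
-/

open MeasureTheory
open scoped Classical

section HypEndo

variable {V E : Type} [Fintype V] {r : ℕ} {edge : E → Fin r → V} {g : V → V}

theorem card_hedgeSet (hinj : ∀ e, Function.Injective (edge e)) (e : E) :
    (hedgeSet r edge e).card = r := by
  rw [hedgeSet, Finset.card_image_of_injective _ (hinj e), Finset.card_univ, Fintype.card_fin]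

theorem IsHypEndo.injOn_hedgeSet (hinj : ∀ e, Function.Injective (edge e))
    (hg : IsHypEndo r edge g) (e : E) : Set.InjOn g (hedgeSet r edge e) := by
  obtain ⟨e', he'⟩ := hg e
  apply Finset.injOn_of_card_image_eq
  rw [he', card_hedgeSet hinj, card_hedgeSet hinj]

theorem IsHypEndo.injective (hinj : ∀ e, Function.Injective (edge e))
    (hcover : ∀ u v : V, ∃ e : E, u ∈ hedgeSet r edge e ∧ v ∈ hedgeSet r edge e)
    (hg : IsHypEndo r edge g) : Function.Injective g := by
  intro u v huv
  obtain ⟨e, hu, hv⟩ := hcover u v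
  exact hg.injOn_hedgeSet hinj e hu hv huv

theorem IsHypEndo.existsUnique_image_hedgeSet_eq [Finite E]
    (hsimple : ∀ e e' : E, hedgeSet r edge e = hedgeSet r edge e' → e = e')
    (hg : IsHypEndo r edge g) (hginj : Function.Injective g) (e : E) :
    ∃! e' : E, Finset.image g (hedgeSet r edge e') = hedgeSet r edge e := by
  have image_eq_iff (a b : E) :
      Finset.image g (hedgeSet r edge a) = Finset.image g (hedgeSet r edge b) ↔ a = b :=
    ⟨fun h => hsimple a b (Finset.image_injective hginj h), fun h => h ▸ rfl⟩
  choose φ hφ using hg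
  have hφinj : Function.Injective φ := fun a b hab => by
    rw [← image_eq_iff, hφ a, hφ b, hab]
  obtain ⟨e', rfl⟩ := Finite.surjective_of_injective hφinj e
  refine ⟨e', hφ e', fun y hy => ?_⟩
  rw [← image_eq_iff, hy, hφ e']

end HypEndo

/-- If every pair of vertices of an `r`-graph `H` (without multiple edges) is
contained in at least one edge, then every endomorphism of `H` is an automorphism,
and consequently every edge of `H` is odd. -/
theorem endo_bijective_and_oddEdge_of_pair_cover
    {V E : Type} [Fintype V] [Fintype E] (r : ℕ)
    (edge : E → Fin r → V) (hinj : ∀ e, Function.Injective (edge e))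
    (hsimple : ∀ e e' : E, hedgeSet r edge e = hedgeSet r edge e' → e = e')
    (hcover : ∀ u v : V, ∃ e : E, u ∈ hedgeSet r edge e ∧ v ∈ hedgeSet r edge e) :
    (∀ g : V → V, IsHypEndo r edge g → Function.Bijective g) ∧
    (∀ e : E, OddEdge r edge e) :=
  ⟨fun _ hg => (hg.injective hinj hcover).bijective_of_finite,
    fun e _ hg => hg.existsUnique_image_hedgeSet_eq hsimple (hg.injective hinj hcover) e⟩
end

section
/- Let r ≥ 3 and let π be a homomorphism from the grid hypergraph H_r to a linear r-graph G. Then the homomorphic image of H_r under π is either isomorphic to H_r, or is a single edge of G, or contains a triangle. -/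
open MeasureTheory
open scoped Classical

/-- The edges of the `r × r` grid `r`-graph `H_r`: its vertices are the nodes of an
`r × r` grid, `Sum.inl i` is the `i`-th row and `Sum.inr j` is the `j`-th column. -/
def gridEdge (r : ℕ) : (Fin r ⊕ Fin r) → Fin r → Fin r × Fin r
  | Sum.inl i => fun j => (i, j)
  | Sum.inr j => fun i => (i, j)

/-!
If `π` is injective there is nothing to prove. Otherwise `π` identifies two nodes `(i, j)` and
`(i', j')`; as `π` is injective on every edge of the grid, `j ≠ j'`, so row `i` and column `j'`
share the two distinct image points `π (i, j) = π (i', j')` and `π (i, j')`, and by linearity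
their images coincide. So the image of some row `a` is also that of a column `c`. If another
row `i` has the same image as row `a`, every column meets this edge twice, hence equals it, and
then so does every row: the image is a single edge. Otherwise rows `i` and `a` meet in at most
one point, which rules out any column `j ≠ c` sharing the image of row `a`, and all but one
column sharing the image of row `i`; since `r ≥ 3` some column `j ≠ c` is left, and row `i`,
column `j` and row `a` form a triangle with corners `π (i, j)`, `π (i, c)`, `π (a, j)`.
-/

open Finset Function

section LinearFamily

variable {α : Type*} [DecidableEq α]

def IsLinear (𝓔 : Set (Finset α)) : Prop :=
  𝓔.Pairwise fun A B => #(A ∩ B) ≤ 1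

def IsTriangle (A B C : Finset α) : Prop :=
  #(A ∩ B) = 1 ∧ #(A ∩ C) = 1 ∧ #(B ∩ C) = 1 ∧ A ∩ B ∩ C = ∅

variable {𝓔 : Set (Finset α)} {A B C : Finset α} {x y z : α}

theorem IsLinear.eq_of_mem_inter_of_ne (h𝓔 : IsLinear 𝓔) (hA : A ∈ 𝓔) (hB : B ∈ 𝓔)
    (hAB : A ≠ B) (hx : x ∈ A ∩ B) (hy : y ∈ A ∩ B) : x = y :=
  card_le_one.1 (h𝓔 hA hB hAB) x hx y hy

theorem IsLinear.eq_of_mem_inter (h𝓔 : IsLinear 𝓔) (hA : A ∈ 𝓔) (hB : B ∈ 𝓔)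
    (hx : x ∈ A ∩ B) (hy : y ∈ A ∩ B) (hxy : x ≠ y) : A = B := by
  by_contra hAB
  exact hxy (h𝓔.eq_of_mem_inter_of_ne hA hB hAB hx hy)

theorem IsLinear.card_inter_eq_one (h𝓔 : IsLinear 𝓔) (hA : A ∈ 𝓔) (hB : B ∈ 𝓔)
    (hAB : A ≠ B) (hx : x ∈ A ∩ B) : #(A ∩ B) = 1 :=
  (h𝓔 hA hB hAB).antisymm (card_pos.2 ⟨x, hx⟩)

theorem IsLinear.mono {𝓕 : Set (Finset α)} (h𝓔 : IsLinear 𝓔) (h : 𝓕 ⊆ 𝓔) : IsLinear 𝓕 :=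
  Set.Pairwise.mono h h𝓔

theorem IsLinear.isTriangle (h𝓔 : IsLinear 𝓔) (hA : A ∈ 𝓔) (hB : B ∈ 𝓔) (hC : C ∈ 𝓔)
    (hAB : A ≠ B) (hAC : A ≠ C) (hBC : B ≠ C)
    (hx : x ∈ A ∩ B) (hy : y ∈ A ∩ C) (hz : z ∈ B ∩ C) (hxy : x ≠ y) : IsTriangle A B C := by
  refine ⟨h𝓔.card_inter_eq_one hA hB hAB hx, h𝓔.card_inter_eq_one hA hC hAC hy,
    h𝓔.card_inter_eq_one hB hC hBC hz, eq_empty_of_forall_notMem fun w hw => hxy ?_⟩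
  obtain ⟨hwAB, hwC⟩ := mem_inter.1 hw
  have hwAC : w ∈ A ∩ C := mem_inter.2 ⟨(mem_inter.1 hwAB).1, hwC⟩
  exact (h𝓔.eq_of_mem_inter_of_ne hA hB hAB hwAB hx).symm.trans
    (h𝓔.eq_of_mem_inter_of_ne hA hC hAC hwAC hy)

end LinearFamily

theorem apply_mem_hedgeSet {V E : Type} [Fintype V] {r : ℕ} (edge : E → Fin r → V) (e : E)
    (k : Fin r) : edge e k ∈ hedgeSet r edge e :=
  mem_image_of_mem _ (mem_univ k)

theorem card_hedgeSet_s11 {V E : Type} [Fintype V] {r : ℕ} {edge : E → Fin r → V} {e : E}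
    (h : Injective (edge e)) : #(hedgeSet r edge e) = r := by
  rw [hedgeSet, card_image_of_injective _ h, card_univ, Fintype.card_fin]

theorem isLinear_range_hedgeSet {V E : Type} [Fintype V] [DecidableEq V] {r : ℕ}
    {edge : E → Fin r → V}
    (h : ∀ e e', e ≠ e' → #(hedgeSet r edge e ∩ hedgeSet r edge e') ≤ 1) :
    IsLinear (Set.range (hedgeSet r edge)) := by
  rintro _ ⟨e, rfl⟩ _ ⟨e', rfl⟩ hne
  exact h e e' (ne_of_apply_ne _ hne)

theorem gridEdge_injective {r : ℕ} (e : Fin r ⊕ Fin r) : Injective (gridEdge r e) := by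
  cases e with
  | inl i => exact fun j j' h => congrArg Prod.snd h
  | inr j => exact fun i i' h => congrArg Prod.fst h

section GridImage

variable {W : Type*} {r : ℕ} {π : Fin r × Fin r → W}

theorem injective_apply_mk_left (hinj : ∀ e, Set.InjOn π (hedgeSet r (gridEdge r) e))
    (i : Fin r) : Injective fun j => π (i, j) := fun j j' h =>
  congrArg Prod.snd <| hinj (.inl i) (apply_mem_hedgeSet _ _ j) (apply_mem_hedgeSet _ _ j') h

theorem injective_apply_mk_right (hinj : ∀ e, Set.InjOn π (hedgeSet r (gridEdge r) e))
    (j : Fin r) : Injective fun i => π (i, j) := fun i i' h =>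
  congrArg Prod.fst <| hinj (.inr j) (apply_mem_hedgeSet _ _ i) (apply_mem_hedgeSet _ _ i') h

variable [DecidableEq W]

variable (π) in
noncomputable def gridImage (e : Fin r ⊕ Fin r) : Finset W :=
  (hedgeSet r (gridEdge r) e).image π

theorem apply_mem_gridImage_inl (i j : Fin r) : π (i, j) ∈ gridImage π (.inl i) :=
  mem_image_of_mem _ (apply_mem_hedgeSet (gridEdge r) (.inl i) j)

theorem apply_mem_gridImage_inr (i j : Fin r) : π (i, j) ∈ gridImage π (.inr j) :=
  mem_image_of_mem _ (apply_mem_hedgeSet (gridEdge r) (.inr j) i)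

theorem gridImage_mem_range (e : Fin r ⊕ Fin r) : gridImage π e ∈ Set.range (gridImage π) :=
  Set.mem_range_self e

theorem exists_gridImage_inl_eq_inr (hinj : ∀ e, Set.InjOn π (hedgeSet r (gridEdge r) e))
    (hlin : IsLinear (Set.range (gridImage π))) (hπ : ¬ Injective π) :
    ∃ a c, gridImage π (.inl a) = gridImage π (.inr c) := by
  obtain ⟨⟨i, j⟩, ⟨i', j'⟩, heq, hne⟩ := not_injective_iff.1 hπ
  have hjj' : j ≠ j' := by
    rintro rfl
    exact hne (congrArg (·, j) (injective_apply_mk_right hinj j heq))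
  refine ⟨i, j', hlin.eq_of_mem_inter (gridImage_mem_range _) (gridImage_mem_range _)
    (x := π (i, j)) (y := π (i, j')) ?_ ?_ ((injective_apply_mk_left hinj i).ne hjj')⟩
  · exact mem_inter.2 ⟨apply_mem_gridImage_inl i j, heq ▸ apply_mem_gridImage_inr i' j'⟩
  · exact mem_inter.2 ⟨apply_mem_gridImage_inl i j', apply_mem_gridImage_inr i j'⟩

theorem gridImage_eq_of_inl_eq_inl (hinj : ∀ e, Set.InjOn π (hedgeSet r (gridEdge r) e))
    (hlin : IsLinear (Set.range (gridImage π))) {a b : Fin r} (hab : a ≠ b)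
    (h : gridImage π (.inl a) = gridImage π (.inl b)) (e : Fin r ⊕ Fin r) :
    gridImage π e = gridImage π (.inl a) := by
  have hcol (j : Fin r) : gridImage π (.inr j) = gridImage π (.inl a) :=
    hlin.eq_of_mem_inter (gridImage_mem_range _) (gridImage_mem_range _)
      (mem_inter.2 ⟨apply_mem_gridImage_inr a j, apply_mem_gridImage_inl a j⟩)
      (mem_inter.2 ⟨apply_mem_gridImage_inr b j, h ▸ apply_mem_gridImage_inl b j⟩)
      ((injective_apply_mk_right hinj j).ne hab)
  cases e with
  | inr j => exact hcol j
  | inl i =>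
    exact hlin.eq_of_mem_inter (gridImage_mem_range _) (gridImage_mem_range _)
      (mem_inter.2 ⟨apply_mem_gridImage_inl i a, hcol a ▸ apply_mem_gridImage_inr i a⟩)
      (mem_inter.2 ⟨apply_mem_gridImage_inl i b, hcol b ▸ apply_mem_gridImage_inr i b⟩)
      ((injective_apply_mk_left hinj i).ne hab)

theorem exists_isTriangle_of_inl_eq_inr (hr : 3 ≤ r)
    (hinj : ∀ e, Set.InjOn π (hedgeSet r (gridEdge r) e))
    (hlin : IsLinear (Set.range (gridImage π))) {a c i : Fin r}
    (hac : gridImage π (.inl a) = gridImage π (.inr c))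
    (hia : gridImage π (.inl i) ≠ gridImage π (.inl a)) :
    ∃ e₁ e₂ e₃, IsTriangle (gridImage π e₁) (gridImage π e₂) (gridImage π e₃) := by
  have hrows {x y : W} :=
    hlin.eq_of_mem_inter_of_ne (x := x) (y := y) (gridImage_mem_range _) (gridImage_mem_range _) hia
  have hcol_ne (j : Fin r) (hjc : j ≠ c) : gridImage π (.inr j) ≠ gridImage π (.inl a) := by
    intro hj
    refine (injective_apply_mk_left hinj i).ne hjc (hrows ?_ ?_)
    · exact mem_inter.2 ⟨apply_mem_gridImage_inl i j, hj ▸ apply_mem_gridImage_inr i j⟩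
    · exact mem_inter.2 ⟨apply_mem_gridImage_inl i c, hac ▸ apply_mem_gridImage_inr i c⟩
  -- two columns other than `c` cannot both have the image of row `i`: rows `i`, `a` meet once
  obtain ⟨j, hjc, hji⟩ : ∃ j ≠ c, gridImage π (.inr j) ≠ gridImage π (.inl i) := by
    obtain ⟨j₁, hj₁, j₂, hj₂, hj⟩ := one_lt_card.1 (show 1 < #({c}ᶜ : Finset (Fin r)) by
      rw [card_compl, card_singleton, Fintype.card_fin]; omega)
    by_contra! h
    refine (injective_apply_mk_left hinj a).ne hj (hrows ?_ ?_)
    · exact mem_inter.2 ⟨h j₁ (by simpa using hj₁) ▸ apply_mem_gridImage_inr a j₁,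
        apply_mem_gridImage_inl a j₁⟩
    · exact mem_inter.2 ⟨h j₂ (by simpa using hj₂) ▸ apply_mem_gridImage_inr a j₂,
        apply_mem_gridImage_inl a j₂⟩
  refine ⟨.inl i, .inr j, .inl a, hlin.isTriangle (gridImage_mem_range _)
    (gridImage_mem_range _) (gridImage_mem_range _) hji.symm hia (hcol_ne j hjc)
    (mem_inter.2 ⟨apply_mem_gridImage_inl i j, apply_mem_gridImage_inr i j⟩)
    (mem_inter.2 ⟨apply_mem_gridImage_inl i c, hac ▸ apply_mem_gridImage_inr i c⟩)
    (mem_inter.2 ⟨apply_mem_gridImage_inr a j, apply_mem_gridImage_inl a j⟩)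
    ((injective_apply_mk_left hinj i).ne hjc)⟩

theorem gridImage_trichotomy (hr : 3 ≤ r)
    (hinj : ∀ e, Set.InjOn π (hedgeSet r (gridEdge r) e))
    (hlin : IsLinear (Set.range (gridImage π))) :
    Injective π ∨ (∃ e₀, ∀ e, gridImage π e = gridImage π e₀) ∨
      ∃ e₁ e₂ e₃, IsTriangle (gridImage π e₁) (gridImage π e₂) (gridImage π e₃) := by
  by_cases hπ : Injective π
  · exact .inl hπ
  obtain ⟨a, c, hac⟩ := exists_gridImage_inl_eq_inr hinj hlin hπ
  obtain ⟨i, hia⟩ := Fintype.exists_ne_of_one_lt_card (by rw [Fintype.card_fin]; omega) a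
  by_cases h : gridImage π (.inl i) = gridImage π (.inl a)
  · exact .inr (.inl ⟨_, gridImage_eq_of_inl_eq_inl hinj hlin hia h⟩)
  · exact .inr (.inr (exists_isTriangle_of_inl_eq_inr hr hinj hlin hac h))

end GridImage

theorem grid_hom_image_trichotomy_general
    {W F : Type} [Fintype W] (r : ℕ) (hr : 3 ≤ r)
    (gedge : F → Fin r → W) (hinj : ∀ f, Function.Injective (gedge f))
    (hlinear : ∀ f f' : F, f ≠ f' →
      (hedgeSet r gedge f ∩ hedgeSet r gedge f').card ≤ 1)
    (π : Fin r × Fin r → W)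
    (hhom : ∀ e : Fin r ⊕ Fin r, ∃ f : F,
      Finset.image π (hedgeSet r (gridEdge r) e) = hedgeSet r gedge f) :
    -- the image is isomorphic to `H_r`:
    (∃ φ : Fin r × Fin r → W, Function.Injective φ ∧
      Finset.image φ Finset.univ = Finset.image π Finset.univ ∧
      (∀ s : Finset W,
        (∃ e, Finset.image π (hedgeSet r (gridEdge r) e) = s) ↔
        (∃ e, Finset.image φ (hedgeSet r (gridEdge r) e) = s))) ∨
    -- the image is a single edge of `G`:
    (∃ f : F, ∀ e, Finset.image π (hedgeSet r (gridEdge r) e) = hedgeSet r gedge f) ∨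
    -- the image contains a triangle:
    (∃ s₁ s₂ s₃ : Finset W,
      (∃ e, Finset.image π (hedgeSet r (gridEdge r) e) = s₁) ∧
      (∃ e, Finset.image π (hedgeSet r (gridEdge r) e) = s₂) ∧
      (∃ e, Finset.image π (hedgeSet r (gridEdge r) e) = s₃) ∧
      (s₁ ∩ s₂).card = 1 ∧ (s₁ ∩ s₃).card = 1 ∧ (s₂ ∩ s₃).card = 1 ∧
      s₁ ∩ s₂ ∩ s₃ = ∅) := by
  have hinjOn (e : Fin r ⊕ Fin r) : Set.InjOn π (hedgeSet r (gridEdge r) e) := by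
    obtain ⟨f, hf⟩ := hhom e
    exact card_image_iff.1 <| by
      rw [hf, card_hedgeSet_s11 (hinj f), card_hedgeSet_s11 (gridEdge_injective e)]
  have hlin : IsLinear (Set.range (gridImage π)) :=
    (isLinear_range_hedgeSet hlinear).mono <|
      Set.range_subset_iff.2 fun e => (hhom e).imp fun _ hf => hf.symm
  rcases gridImage_trichotomy hr hinjOn hlin with hπ | ⟨e₀, he₀⟩ | ⟨e₁, e₂, e₃, htri⟩
  · exact .inl ⟨π, hπ, rfl, fun _ => .rfl⟩
  · obtain ⟨f, hf⟩ := hhom e₀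
    exact .inr (.inl ⟨f, fun e => (he₀ e).trans hf⟩)
  · exact .inr (.inr ⟨_, _, _, ⟨e₁, rfl⟩, ⟨e₂, rfl⟩, ⟨e₃, rfl⟩, htri⟩)

/-- **Lemma 6.** Let `r ≥ 3` and let `π` be a homomorphism from the grid hypergraph
`H_r` to a linear `r`-graph `G`. Then the homomorphic image of `H_r` under `π` is
either isomorphic to `H_r`, or is a single edge of `G`, or contains a triangle. -/
theorem grid_hom_image_trichotomy
    {W F : Type} [Fintype W] [Fintype F] (r : ℕ) (hr : 3 ≤ r)
    (gedge : F → Fin r → W) (hinj : ∀ f, Function.Injective (gedge f))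
    (hlinear : ∀ f f' : F, f ≠ f' →
      (hedgeSet r gedge f ∩ hedgeSet r gedge f').card ≤ 1)
    (π : Fin r × Fin r → W)
    (hhom : ∀ e : Fin r ⊕ Fin r, ∃ f : F,
      Finset.image π (hedgeSet r (gridEdge r) e) = hedgeSet r gedge f) :
    -- the image is isomorphic to `H_r`:
    (∃ φ : Fin r × Fin r → W, Function.Injective φ ∧
      Finset.image φ Finset.univ = Finset.image π Finset.univ ∧
      (∀ s : Finset W,
        (∃ e, Finset.image π (hedgeSet r (gridEdge r) e) = s) ↔
        (∃ e, Finset.image φ (hedgeSet r (gridEdge r) e) = s))) ∨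
    -- the image is a single edge of `G`:
    (∃ f : F, ∀ e, Finset.image π (hedgeSet r (gridEdge r) e) = hedgeSet r gedge f) ∨
    -- the image contains a triangle:
    (∃ s₁ s₂ s₃ : Finset W,
      (∃ e, Finset.image π (hedgeSet r (gridEdge r) e) = s₁) ∧
      (∃ e, Finset.image π (hedgeSet r (gridEdge r) e) = s₂) ∧
      (∃ e, Finset.image π (hedgeSet r (gridEdge r) e) = s₃) ∧
      (s₁ ∩ s₂).card = 1 ∧ (s₁ ∩ s₃).card = 1 ∧ (s₂ ∩ s₃).card = 1 ∧
      s₁ ∩ s₂ ∩ s₃ = ∅) :=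
  grid_hom_image_trichotomy_general r hr gedge hinj hlinear π hhom
end

section
/- If a graph G has a stable involution, then G is positive. -/
open MeasureTheory
open scoped Classical

/-!
Write `V₀` for the fixed points of `π`, `V₊ = A` and `V₋ = π '' A`. Stability makes every edge
meet exactly one of `V₊` and `V₋`, and `π` swaps these two classes of edges. Hence the integrand
of `t_G(f)` is `P(x) * P(x ∘ π)`, where `P`, the product over the edges meeting `V₊`, only reads
`x` on `V₀ ∪ V₊`. Once `x` is fixed on `V₀`, the coordinates on `V₊` and on `V₋` are independent
copies of each other, so `t_G(f)` is the integral over `V₀` of a square.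
-/

section FiberSquare

variable {γ α : Type*} [MeasurableSpace γ] [MeasurableSpace α] {μ : Measure γ} {ν : Measure α}
  [SigmaFinite μ] [SigmaFinite ν]

theorem integral_mul_fiber_nonneg (p : γ → α → ℝ)
    (hp : Integrable (fun z : γ × α × α => p z.1 z.2.1 * p z.1 z.2.2) (μ.prod (ν.prod ν))) :
    0 ≤ ∫ z, p z.1 z.2.1 * p z.1 z.2.2 ∂μ.prod (ν.prod ν) := by
  rw [integral_prod _ hp]
  refine integral_nonneg fun c => ?_
  simp only [integral_prod_mul (p c) (p c)]
  exact mul_self_nonneg _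

end FiberSquare

section Glue

variable {ι κ α : Type*}

noncomputable def glueEquiv (X : Type*) [MeasurableSpace X] (e : ι ≃ κ ⊕ (α ⊕ α)) :
    ((κ → X) × (α → X) × (α → X)) ≃ᵐ (ι → X) :=
  ((MeasurableEquiv.refl _).prodCongr (MeasurableEquiv.sumPiEquivProdPi fun _ => X).symm).trans
    ((MeasurableEquiv.sumPiEquivProdPi fun _ => X).symm.trans
      (MeasurableEquiv.piCongrLeft (fun _ => X) e.symm))

theorem glueEquiv_apply {X : Type*} [MeasurableSpace X] (e : ι ≃ κ ⊕ (α ⊕ α))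
    (z : (κ → X) × (α → X) × (α → X)) (v : ι) :
    glueEquiv X e z v = Sum.elim z.1 (Sum.elim z.2.1 z.2.2) (e v) := by
  obtain ⟨w, rfl⟩ := e.symm.surjective v
  simp only [glueEquiv, MeasurableEquiv.trans_apply, MeasurableEquiv.coe_piCongrLeft,
    Equiv.piCongrLeft_apply_apply, Equiv.apply_symm_apply]
  rcases w with c | a | b <;> rfl

theorem measurePreserving_glueEquiv (X : Type*) [MeasureSpace X]
    [SigmaFinite (volume : Measure X)] [Fintype ι] [Fintype κ] [Fintype α] (e : ι ≃ κ ⊕ (α ⊕ α)) :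
    MeasurePreserving (glueEquiv X e) volume volume :=
  (volume_measurePreserving_piCongrLeft (fun _ => X) e.symm).comp <|
    (volume_measurePreserving_sumPiEquivProdPi_symm fun _ => X).comp <|
      (MeasurePreserving.id volume).prod
        (volume_measurePreserving_sumPiEquivProdPi_symm fun _ => X)

end Glue

/-- `A` plays the role of `V₊`: the sets `{v | π v = v}`, `A` and `π '' A` partition `ι`. -/
structure IsInvolutionSplit {ι : Type*} (π : ι → ι) (A : Set ι) : Prop where
  involutive : Function.Involutive π
  apply_notMem : ∀ v ∈ A, π v ∉ A
  mem_or_apply_mem : ∀ v, π v ≠ v → v ∈ A ∨ π v ∈ A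

namespace IsInvolutionSplit

variable {ι : Type*} {π : ι → ι} {A : Set ι}

theorem apply_ne_self_of_mem (h : IsInvolutionSplit π A) {v : ι} (hv : v ∈ A) : π v ≠ v :=
  fun hfix => h.apply_notMem v hv (by rwa [hfix])

theorem apply_eq_self_of_notMem (h : IsInvolutionSplit π A) {v : ι} (hv : v ∉ A)
    (hπv : π v ∉ A) : π v = v :=
  not_not.1 fun hmoved => (h.mem_or_apply_mem v hmoved).elim hv hπv

noncomputable def equiv (h : IsInvolutionSplit π A) : ι ≃ {v // π v = v} ⊕ (A ⊕ A) where
  toFun v :=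
    if hv : π v = v then .inl ⟨v, hv⟩
    else if hA : v ∈ A then .inr (.inl ⟨v, hA⟩)
    else .inr (.inr ⟨π v, (h.mem_or_apply_mem v hv).resolve_left hA⟩)
  invFun := Sum.elim Subtype.val (Sum.elim Subtype.val (π ∘ Subtype.val))
  left_inv v := by
    by_cases hv : π v = v
    · simp [hv]
    · by_cases hA : v ∈ A <;> simp [hv, hA, h.involutive v]
  right_inv := by
    rintro (⟨c, hc⟩ | ⟨a, ha⟩ | ⟨a, ha⟩)
    · simp [hc]
    · simp [h.apply_ne_self_of_mem ha, ha]
    · simp [h.involutive a, (h.apply_ne_self_of_mem ha).symm, h.apply_notMem a ha]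

theorem equiv_symm_apply_swap (h : IsInvolutionSplit π A) (w : {v // π v = v} ⊕ (A ⊕ A)) :
    h.equiv.symm (Sum.map id Sum.swap w) = π (h.equiv.symm w) := by
  rcases w with ⟨c, hc⟩ | a | a
  · exact hc.symm
  · rfl
  · exact (h.involutive a).symm

theorem apply_mem_of_equiv_eq_inr_inr (h : IsInvolutionSplit π A) {v : ι} {a : A}
    (hv : h.equiv v = .inr (.inr a)) : π v ∈ A := by
  rw [← h.equiv.symm_apply_apply v, hv]
  simp [equiv, h.involutive a]

theorem glueEquiv_comp (h : IsInvolutionSplit π A) {X : Type*} [MeasurableSpace X]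
    (c : {v // π v = v} → X) (a b : A → X) :
    glueEquiv X h.equiv (c, a, b) ∘ π = glueEquiv X h.equiv (c, b, a) := by
  funext v
  obtain ⟨w, rfl⟩ := h.equiv.symm.surjective v
  rw [Function.comp_apply, ← h.equiv_symm_apply_swap]
  simp only [glueEquiv_apply, Equiv.apply_symm_apply]
  rcases w with _ | _ | _ <;> rfl

theorem glueEquiv_apply_of_apply_notMem (h : IsInvolutionSplit π A) {X : Type*}
    [MeasurableSpace X] (c : {v // π v = v} → X) (a b b' : A → X) {v : ι} (hv : π v ∉ A) :
    glueEquiv X h.equiv (c, a, b) v = glueEquiv X h.equiv (c, a, b') v := by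
  simp only [glueEquiv_apply]
  rcases hw : h.equiv v with _ | _ | _
  · rfl
  · rfl
  · exact absurd (h.apply_mem_of_equiv_eq_inr_inr hw) hv

theorem integral_mul_comp_nonneg [Fintype ι] (h : IsInvolutionSplit π A) {X : Type*}
    [MeasureSpace X] [SigmaFinite (volume : Measure X)] (P : (ι → X) → ℝ)
    (hP : ∀ x y, (∀ v, π v ∉ A → x v = y v) → P x = P y)
    (hint : Integrable fun x => P x * P (x ∘ π)) :
    0 ≤ ∫ x, P x * P (x ∘ π) := by
  set Φ := glueEquiv X h.equiv
  have hΦ : MeasurePreserving Φ volume volume := measurePreserving_glueEquiv X h.equiv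
  set p : ({v // π v = v} → X) → (A → X) → ℝ := fun c a => P (Φ (c, a, a))
  have hsplit : (fun x => P x * P (x ∘ π)) ∘ Φ = fun z => p z.1 z.2.1 * p z.1 z.2.2 := by
    funext ⟨c, a, b⟩
    rw [Function.comp_apply, h.glueEquiv_comp]
    congr 1 <;> exact hP _ _ fun v hv => h.glueEquiv_apply_of_apply_notMem _ _ _ _ hv
  rw [← hΦ.integrable_comp_emb Φ.measurableEmbedding, hsplit] at hint
  calc 0 ≤ ∫ z : _ × _ × _, p z.1 z.2.1 * p z.1 z.2.2 := integral_mul_fiber_nonneg p hint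
    _ = ∫ z, P (Φ z) * P (Φ z ∘ π) := by rw [← hsplit]; rfl
    _ = ∫ x, P x * P (x ∘ π) := hΦ.integral_comp' fun x => P x * P (x ∘ π)

end IsInvolutionSplit

theorem Function.Involutive.sym2_map {α : Type*} {π : α → α} (h : Function.Involutive π) :
    Function.Involutive (Sym2.map π) := fun e => by
  rw [Sym2.map_map, h.comp_self, Sym2.map_id, id]

section EdgeWeight

variable {V X : Type*} (f : X → X → ℝ) (hf : ∀ a b, f a b = f b a)

def edgeWeight (x : V → X) : Sym2 V → ℝ :=
  Sym2.lift ⟨fun u v => f (x u) (x v), fun u v => hf (x u) (x v)⟩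

@[simp]
theorem edgeWeight_mk (x : V → X) (u v : V) : edgeWeight f hf x s(u, v) = f (x u) (x v) := rfl

theorem edgeWeight_comp (x : V → X) (π : V → V) (e : Sym2 V) :
    edgeWeight f hf (x ∘ π) e = edgeWeight f hf x (e.map π) := by
  induction e using Sym2.ind with | _ u v => rfl

theorem edgeWeight_congr {x y : V → X} {e : Sym2 V} (hxy : ∀ v ∈ e, x v = y v) :
    edgeWeight f hf x e = edgeWeight f hf y e := by
  induction e using Sym2.ind with
  | _ u v => simp [hxy u (Sym2.mem_mk_left u v), hxy v (Sym2.mem_mk_right u v)]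

variable [MeasurableSpace X]

theorem measurable_edgeWeight (hmeas : Measurable fun p : X × X => f p.1 p.2) (e : Sym2 V) :
    Measurable fun x : V → X => edgeWeight f hf x e := by
  induction e using Sym2.ind with
  | _ u v => exact hmeas.comp (by fun_prop : Measurable fun x : V → X => (x u, x v))

theorem integrable_prod_edgeWeight (hmeas : Measurable fun p : X × X => f p.1 p.2)
    {μ : Measure (V → X)} [IsFiniteMeasure μ] {C : ℝ}
    (hC : ∀ a b, |f a b| ≤ C) (s : Finset (Sym2 V)) :
    Integrable (fun x => ∏ e ∈ s, edgeWeight f hf x e) μ := by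
  have hm := Finset.measurable_prod s fun e _ => measurable_edgeWeight f hf hmeas e
  refine .of_bound hm.aestronglyMeasurable (C ^ s.card) (ae_of_all _ fun x => ?_)
  rw [Real.norm_eq_abs, Finset.abs_prod, ← Finset.prod_const]
  refine Finset.prod_le_prod (fun _ _ => abs_nonneg _) fun e _ => ?_
  induction e using Sym2.ind with | _ u v => exact hC _ _

end EdgeWeight

structure IsStableInvolution {V : Type*} (G : SimpleGraph V) (π : V → V) (A : Set V) : Prop
    extends IsInvolutionSplit π A where
  adj_apply : ∀ u v, G.Adj u v → G.Adj (π u) (π v)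
  not_adj_of_fixed : ∀ u v, π u = u → π v = v → ¬ G.Adj u v
  not_adj_of_mem_of_apply_mem : ∀ u v, u ∈ A → π v ∈ A → ¬ G.Adj u v

namespace IsStableInvolution

variable {V : Type*} {G : SimpleGraph V} {π : V → V} {A : Set V}

theorem apply_notMem_of_adj (h : IsStableInvolution G π A) {u v : V} (huv : G.Adj u v)
    (hA : u ∈ A ∨ v ∈ A) : π u ∉ A := by
  rcases hA with hu | hv
  · exact h.apply_notMem u hu
  · exact fun hu => h.not_adj_of_mem_of_apply_mem v u hv hu huv.symm

/-- Every edge meets exactly one of `A` and `π '' A`. -/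
theorem mem_or_mem_iff (h : IsStableInvolution G π A) {u v : V} (huv : G.Adj u v) :
    u ∈ A ∨ v ∈ A ↔ ¬(π u ∈ A ∨ π v ∈ A) := by
  refine ⟨fun hA => not_or.2 ⟨h.apply_notMem_of_adj huv hA,
    h.apply_notMem_of_adj huv.symm hA.symm⟩, fun hπ => ?_⟩
  obtain ⟨hπu, hπv⟩ := not_or.1 hπ
  by_contra hA
  obtain ⟨hu, hv⟩ := not_or.1 hA
  exact h.not_adj_of_fixed u v (h.apply_eq_self_of_notMem hu hπu)
    (h.apply_eq_self_of_notMem hv hπv) huv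

theorem map_mem_edgeSet_iff (h : IsStableInvolution G π A) {e : Sym2 V} :
    e.map π ∈ G.edgeSet ↔ e ∈ G.edgeSet := by
  induction e using Sym2.ind with
  | _ u v =>
    rw [Sym2.map_mk, SimpleGraph.mem_edgeSet, SimpleGraph.mem_edgeSet]
    refine ⟨fun hπ => ?_, h.adj_apply u v⟩
    simpa only [h.involutive _] using h.adj_apply _ _ hπ

theorem exists_mem_map_iff (h : IsStableInvolution G π A) {e : Sym2 V} (he : e ∈ G.edgeSet) :
    (∃ v ∈ e.map π, v ∈ A) ↔ ¬∃ v ∈ e, v ∈ A := by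
  induction e using Sym2.ind with
  | _ u v =>
    rw [Sym2.map_mk]
    simpa only [Sym2.mem_iff, exists_eq_or_imp, exists_eq_left] using
      iff_not_comm.1 (h.mem_or_mem_iff he)

theorem apply_notMem_of_exists_mem (h : IsStableInvolution G π A) {e : Sym2 V}
    (he : e ∈ G.edgeSet) (hA : ∃ v ∈ e, v ∈ A) {v : V} (hv : v ∈ e) : π v ∉ A :=
  fun hπv => (h.exists_mem_map_iff he).1 ⟨π v, Sym2.mem_map.2 ⟨v, hv, rfl⟩, hπv⟩ hA

variable {X : Type*} (f : X → X → ℝ) (hf : ∀ a b, f a b = f b a)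

theorem prod_edgeWeight_eq_mul [Fintype V] (h : IsStableInvolution G π A) (x : V → X) :
    ∏ e ∈ G.edgeFinset, edgeWeight f hf x e =
      (∏ e ∈ G.edgeFinset with ∃ v ∈ e, v ∈ A, edgeWeight f hf x e) *
        ∏ e ∈ G.edgeFinset with ∃ v ∈ e, v ∈ A, edgeWeight f hf (x ∘ π) e := by
  rw [← Finset.prod_filter_mul_prod_filter_not G.edgeFinset (∃ v ∈ ·, v ∈ A)]
  congr 1
  refine (Finset.prod_equiv h.involutive.sym2_map.toPerm (fun e => ?_) fun e _ => ?_).symm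
  · simp only [Finset.mem_filter, SimpleGraph.mem_edgeFinset, Function.Involutive.coe_toPerm,
      h.map_mem_edgeSet_iff]
    exact and_congr_right fun he => (not_congr (h.exists_mem_map_iff he)).trans not_not |>.symm
  · exact edgeWeight_comp f hf x π e

theorem integral_prod_edgeWeight_nonneg [Fintype V] [MeasureSpace X]
    [IsFiniteMeasure (volume : Measure X)] (h : IsStableInvolution G π A)
    (hmeas : Measurable fun p : X × X => f p.1 p.2) {C : ℝ} (hC : ∀ a b, |f a b| ≤ C) :
    0 ≤ ∫ x : V → X, ∏ e ∈ G.edgeFinset, edgeWeight f hf x e := by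
  have hint := integrable_prod_edgeWeight f hf hmeas (μ := volume) hC G.edgeFinset
  rw [funext (h.prod_edgeWeight_eq_mul f hf)] at hint ⊢
  refine h.integral_mul_comp_nonneg _ (fun x y hxy => Finset.prod_congr rfl fun e he => ?_) hint
  rw [Finset.mem_filter, SimpleGraph.mem_edgeFinset] at he
  exact edgeWeight_congr f hf fun v hv => hxy v (h.apply_notMem_of_exists_mem he.1 he.2 hv)

end IsStableInvolution

/-- If a graph `G` has a stable involution, then `G` is positive.
Here `π` is an involutive automorphism of `G`, and `A` plays the role of `V₊`:
the sets `V₀ = {v | π v = v}`, `V₊ = A` and `V₋ = π '' A` partition the vertices,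
there is no edge with both ends in `V₀`, and no edge with one end in `V₊` and the
other in `V₋`. -/
theorem positive_of_stable_involution
    {V : Type} [Fintype V] (G : SimpleGraph V) (π : V → V)
    (hinv : ∀ v, π (π v) = v)
    (hauto : ∀ u v, G.Adj u v → G.Adj (π u) (π v))
    (A : Set V)
    (hdisj : ∀ v ∈ A, π v ∉ A ∧ π v ≠ v)
    (hcover : ∀ v : V, π v ≠ v → v ∈ A ∨ π v ∈ A)
    (hV0 : ∀ u v, π u = u → π v = v → ¬ G.Adj u v)
    (hpm : ∀ u v, u ∈ A → π v ∈ A → ¬ G.Adj u v) :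
    GraphPositive G := by
  have h : IsStableInvolution G π A :=
    ⟨⟨hinv, fun v hv => (hdisj v hv).1, hcover⟩, hauto, hV0, hpm⟩
  rintro f hf hmeas ⟨C, hC⟩
  exact h.integral_prod_edgeWeight_nonneg f hf hmeas hC
end

section
/- Let G be a connected bipartite graph with bipartition (A,B), let f:[0,1]²→ℝ be bounded measurable, and define g:[0,1]²→ℝ by g(x,y) = f(2x,2y−1) if 0 ≤ x < 1/2 ≤ y ≤ 1, g(x,y) = f(2y,2x−1) if 0 ≤ y < 1/2 ≤ x ≤ 1, and g(x,y) = 0 otherwise. Then g is symmetric and t_G(g) = 2^{−v(G)} (t_G(f) + t_G(f^T)), where f^T(x,y) := f(y,x) and v(G) is the number of vertices of G. -/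
/-!
Split each coordinate `x ∈ [0, 1]` as `x = halve b x'` with a fair coin `b` and a uniform `x'`:
the map `(b, x') ↦ (x' + b) / 2` pushes coin × Lebesgue forward to Lebesgue. Expanding `t_G(g)`
over the `2 ^ v(G)` coin patterns `ε`, a factor `g` vanishes on every edge whose two ends get the
same coin, so only proper `2`-colourings `ε` of `G` contribute. A connected bipartite graph has
just two of them, its two sides, and they contribute `t_G(f)` and `t_G(fᵀ)`.
-/

open MeasureTheory
open scoped Classical

noncomputable section

/-- The homomorphism density of a (not necessarily symmetric) kernel `f` in the
bipartite graph on `A ⊕ B` with edge set `Es ⊆ A × B`: each edge `(a, b)`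
contributes the factor `f (z (inl a)) (z (inr b))`. -/
def bipDensity {A B : Type} [Fintype A] [Fintype B] (Es : Finset (A × B))
    (f : unitInterval → unitInterval → ℝ) : ℝ :=
  ∫ z : (A ⊕ B) → unitInterval,
    ∏ p ∈ Es, f (z (Sum.inl p.1)) (z (Sum.inr p.2))

/-- The bipartite graph on `A ⊕ B` with edge set `Es ⊆ A × B`, as a simple graph. -/
def bipGraph {A B : Type} (Es : Finset (A × B)) : SimpleGraph (A ⊕ B) :=
  SimpleGraph.fromRel (fun u v => ∃ p ∈ Es, u = Sum.inl p.1 ∧ v = Sum.inr p.2)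

/-- The symmetrization `g` of `f`: `g(x,y) = f(2x, 2y−1)` if `0 ≤ x < 1/2 ≤ y ≤ 1`,
`g(x,y) = f(2y, 2x−1)` if `0 ≤ y < 1/2 ≤ x ≤ 1`, and `g(x,y) = 0` otherwise. -/
def symmetrize (f : unitInterval → unitInterval → ℝ) :
    unitInterval → unitInterval → ℝ := fun x y =>
  if x.val < 1/2 ∧ 1/2 ≤ y.val then
    f (Set.projIcc 0 1 zero_le_one (2 * x.val)) (Set.projIcc 0 1 zero_le_one (2 * y.val - 1))
  else if y.val < 1/2 ∧ 1/2 ≤ x.val then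
    f (Set.projIcc 0 1 zero_le_one (2 * y.val)) (Set.projIcc 0 1 zero_le_one (2 * x.val - 1))
  else 0

open Set
open scoped ENNReal unitInterval

theorem MeasureTheory.integral_pi_eq_sum_of_measurePreserving
    {ι β X Y : Type*} [Fintype ι] [DecidableEq ι] [Fintype β] [MeasurableSpace β]
    [MeasurableSingletonClass β] [MeasurableSpace X] [MeasurableSpace Y] {ρ : Measure β}
    [IsFiniteMeasure ρ] {μ : Measure X} [SigmaFinite μ] {ν : Measure Y} [SigmaFinite ν]
    {ψ : β → X → Y} (hψ : MeasurePreserving (Function.uncurry ψ) (ρ.prod μ) ν)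
    {F : (ι → Y) → ℝ} (hF : Integrable F (Measure.pi fun _ => ν)) :
    ∫ z, F z ∂(Measure.pi fun _ => ν) = ∑ ε : ι → β,
      (Measure.pi fun _ => ρ).real {ε} *
        ∫ w, F (fun i => ψ (ε i) (w i)) ∂(Measure.pi fun _ => μ) := by
  have hΦ : MeasurePreserving (fun q : (ι → β) × (ι → X) => fun i => ψ (q.1 i) (q.2 i))
      ((Measure.pi fun _ => ρ).prod (Measure.pi fun _ => μ)) (Measure.pi fun _ => ν) :=
    (measurePreserving_pi _ _ fun _ => hψ).comp
      (measurePreserving_arrowProdEquivProdArrow β X ι _ _).symm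
  have hFΦ : Integrable (fun q : (ι → β) × (ι → X) => F fun i => ψ (q.1 i) (q.2 i))
      ((Measure.pi fun _ => ρ).prod (Measure.pi fun _ => μ)) :=
    hΦ.integrable_comp_of_integrable hF
  rw [← hΦ.map_eq, integral_map hΦ.measurable.aemeasurable (hΦ.map_eq ▸ hF.aestronglyMeasurable),
    integral_prod _ hFΦ, integral_fintype hFΦ.integral_prod_left]
  rfl

def fairCoin : Measure Bool := (2⁻¹ : ℝ≥0∞) • Measure.count

lemma fairCoin_singleton (b : Bool) : fairCoin {b} = 2⁻¹ := by
  simp [fairCoin]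

instance : IsProbabilityMeasure fairCoin :=
  ⟨by rw [fairCoin, Measure.smul_apply, Measure.count_univ]; simp [ENNReal.inv_mul_cancel]⟩

lemma measureReal_pi_fairCoin_singleton {ι : Type*} [Fintype ι] (ε : ι → Bool) :
    (Measure.pi fun _ : ι => fairCoin).real {ε} = (1 / 2) ^ Fintype.card ι := by
  rw [measureReal_def, ← Set.univ_pi_singleton ε, Measure.pi_pi]
  simp [fairCoin_singleton]

namespace unitInterval

def halve (b : Bool) (x : I) : I :=
  ⟨(x + b.toNat) / 2, by constructor <;> cases b <;> simp <;> linarith [x.2.1, x.2.2]⟩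

lemma coe_halve (b : Bool) (x : I) : (halve b x : ℝ) = (x + b.toNat) / 2 := rfl

lemma measurable_uncurry_halve : Measurable (Function.uncurry halve) :=
  (((measurable_subtype_coe.comp measurable_snd).add
    ((measurable_of_countable fun b : Bool => (b.toNat : ℝ)).comp measurable_fst)).div_const
      2).subtype_mk

lemma volume_setOf_coe_le (c : ℝ) :
    volume {x : I | (x : ℝ) ≤ c} = .ofReal (projIcc 0 1 zero_le_one c) := by
  rcases lt_or_ge c 0 with hc | hc
  · have : {x : I | (x : ℝ) ≤ c} = ∅ := by
      ext x; simpa using hc.trans_le x.2.1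
    simp [this, projIcc_of_le_left _ hc.le]
  · have : {x : I | (x : ℝ) ≤ c} = Iic (projIcc 0 1 zero_le_one c) := by
      ext x
      simp only [mem_ofPred_eq, mem_Iic, ← Subtype.coe_le_coe, coe_projIcc]
      constructor
      · intro h; exact le_max_of_le_right (le_min x.2.2 h)
      · intro h; exact h.trans (max_le hc (min_le_right _ _))
    rw [this, volume_Iic]

lemma volume_halve_preimage_Iic (a : I) :
    volume (halve false ⁻¹' Iic a) + volume (halve true ⁻¹' Iic a) = 2 * .ofReal a := by
  have hpre (b : Bool) : halve b ⁻¹' Iic a = {x : I | (x : ℝ) ≤ 2 * a - b.toNat} := by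
    ext x
    simp only [mem_preimage, mem_Iic, ← Subtype.coe_le_coe, coe_halve, mem_ofPred_eq]
    constructor <;> intro h <;> linarith
  simp only [hpre, volume_setOf_coe_le, coe_projIcc]
  rw [← ENNReal.ofReal_ofNat 2, ← ENNReal.ofReal_mul zero_le_two,
    ← ENNReal.ofReal_add (by positivity) (by positivity)]
  congr 1
  have := a.2.1; have := a.2.2
  simp only [Bool.toNat_false, Bool.toNat_true, Nat.cast_zero, Nat.cast_one, sub_zero]
  grind

lemma measurePreserving_uncurry_halve :
    MeasurePreserving (Function.uncurry halve) (fairCoin.prod volume) volume := by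
  refine ⟨measurable_uncurry_halve, Measure.ext_of_Iic _ _ fun a => ?_⟩
  rw [Measure.map_apply measurable_uncurry_halve measurableSet_Iic,
    Measure.prod_apply (measurable_uncurry_halve measurableSet_Iic), lintegral_fintype,
    Fintype.sum_bool]
  change volume (halve true ⁻¹' Iic a) * _ + volume (halve false ⁻¹' Iic a) * _ = _
  rw [fairCoin_singleton, fairCoin_singleton, ← add_mul, add_comm, volume_halve_preimage_Iic,
    volume_Iic, mul_comm, ← mul_assoc, ENNReal.inv_mul_cancel two_ne_zero ENNReal.ofNat_ne_top,
    one_mul]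

lemma projIcc_two_mul_halve_false (x : I) :
    projIcc 0 1 zero_le_one (2 * (halve false x : ℝ)) = x := by
  simp [coe_halve, mul_div_cancel₀]

lemma projIcc_two_mul_halve_true_sub_one (x : I) :
    projIcc 0 1 zero_le_one (2 * (halve true x : ℝ) - 1) = x := by
  simp [coe_halve, mul_div_cancel₀]

lemma coe_halve_false_lt_half {x : I} (hx : x ≠ 1) : (halve false x : ℝ) < 1 / 2 := by
  have : (x : ℝ) < 1 := unitInterval.lt_one_iff_ne_one.2 hx
  simp [coe_halve]
  linarith

lemma half_le_coe_halve_true (x : I) : 1 / 2 ≤ (halve true x : ℝ) := by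
  simp [coe_halve]
  linarith [x.2.1]

lemma ae_ne_one {ι : Type*} [Fintype ι] : ∀ᵐ w : ι → I, ∀ i, w i ≠ 1 :=
  ae_all_iff.2 fun _ =>
    (Measure.tendsto_eval_ae_ae (μ := fun _ : ι => (volume : Measure I))).eventually
      (volume.ae_ne 1)

end unitInterval

open unitInterval

section symmetrize

variable (f : I → I → ℝ)

lemma symmetrize_comm (x y : I) : symmetrize f x y = symmetrize f y x := by
  unfold symmetrize
  split_ifs <;> first | rfl | grind

/-- `halve false 1 = 1/2` lies in the upper half for `symmetrize`, whence `x, y ≠ 1`. -/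
lemma symmetrize_halve_halve {x y : I} (hx : x ≠ 1) (hy : y ≠ 1) (b c : Bool) :
    symmetrize f (halve b x) (halve c y) = if b = c then 0 else if c then f x y else f y x := by
  have hx₀ := coe_halve_false_lt_half hx
  have hy₀ := coe_halve_false_lt_half hy
  have hx₁ := half_le_coe_halve_true x
  have hy₁ := half_le_coe_halve_true y
  cases b <;> cases c <;>
    simp only [symmetrize, hx₀, hy₀, hx₁, hy₁, not_le.2 hx₀, not_le.2 hy₀, not_lt.2 hx₁,
      not_lt.2 hy₁, and_true, and_false, if_true, if_false,
      projIcc_two_mul_halve_false, projIcc_two_mul_halve_true_sub_one] <;> simp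

lemma abs_symmetrize_le {C : ℝ} (hC : ∀ a b, |f a b| ≤ C) (x y : I) :
    |symmetrize f x y| ≤ C := by
  unfold symmetrize
  split_ifs
  · exact hC _ _
  · exact hC _ _
  · exact abs_zero.trans_le ((abs_nonneg _).trans (hC x y))

lemma measurable_symmetrize (hf : Measurable fun p : I × I => f p.1 p.2) :
    Measurable fun p : I × I => symmetrize f p.1 p.2 := by
  have h₁ : Measurable fun p : I × I => (p.1 : ℝ) := by fun_prop
  have h₂ : Measurable fun p : I × I => (p.2 : ℝ) := by fun_prop
  have hproj : Measurable (projIcc (0 : ℝ) 1 zero_le_one) := continuous_projIcc.measurable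
  refine Measurable.ite ?_ ?_ (Measurable.ite ?_ ?_ measurable_const)
  · exact (measurableSet_lt h₁ measurable_const).inter (measurableSet_le measurable_const h₂)
  · exact hf.comp ((hproj.comp (h₁.const_mul 2)).prodMk (hproj.comp ((h₂.const_mul 2).sub_const 1)))
  · exact (measurableSet_lt h₂ measurable_const).inter (measurableSet_le measurable_const h₁)
  · exact hf.comp ((hproj.comp (h₂.const_mul 2)).prodMk (hproj.comp ((h₁.const_mul 2).sub_const 1)))

end symmetrize

section bipGraph

variable {A B : Type} {Es : Finset (A × B)}

lemma eq_isRight_or_eq_isLeft_of_connected (hconn : (bipGraph Es).Connected) {ε : A ⊕ B → Bool}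
    (hε : ∀ p ∈ Es, ε (Sum.inl p.1) ≠ ε (Sum.inr p.2)) : ε = Sum.isRight ∨ ε = Sum.isLeft := by
  have hadj : ∀ u v, (bipGraph Es).Adj u v → (ε u == u.isRight) = (ε v == v.isRight) := by
    rintro u v ⟨-, ⟨p, hp, rfl, rfl⟩ | ⟨p, hp, rfl, rfl⟩⟩ <;> have := hε p hp <;> revert this <;>
      simp only [Sum.isRight_inl, Sum.isRight_inr] <;>
      cases ε (Sum.inl p.1) <;> cases ε (Sum.inr p.2) <;> decide
  have hconst : ∀ u v, (ε u == u.isRight) = (ε v == v.isRight) := fun u v => by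
    obtain ⟨w⟩ := hconn u v
    induction w with
    | nil => rfl
    | cons ha _ ih => exact (hadj _ _ ha).trans ih
  obtain ⟨v₀⟩ := hconn.nonempty
  cases h₀ : (ε v₀ == v₀.isRight)
  · right; funext v; have := (hconst v v₀).trans h₀; cases v <;> simp_all
  · left; funext v; have := (hconst v v₀).trans h₀; simpa using this

variable [Fintype A] [Fintype B] (Es)

lemma integrable_bipDensity_integrand {h : I → I → ℝ}
    (hmeas : Measurable fun p : I × I => h p.1 p.2) {C : ℝ} (hC : ∀ a b, |h a b| ≤ C) :
    Integrable fun z : A ⊕ B → I => ∏ p ∈ Es, h (z (Sum.inl p.1)) (z (Sum.inr p.2)) := by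
  refine .of_bound ?_ (C ^ Es.card) (ae_of_all _ fun z => ?_)
  · refine (Finset.measurable_prod _ fun p _ => ?_).aestronglyMeasurable
    exact hmeas.comp (f := fun z : A ⊕ B → I => (z (Sum.inl p.1), z (Sum.inr p.2))) (by fun_prop)
  · rw [Real.norm_eq_abs, Finset.abs_prod]
    exact (Finset.prod_le_prod (fun _ _ => abs_nonneg _) fun _ _ => hC _ _).trans_eq
      (Finset.prod_const C)

lemma integral_prod_symmetrize_halve (hconn : (bipGraph Es).Connected) (f : I → I → ℝ)
    (ε : A ⊕ B → Bool) :
    ∫ w : A ⊕ B → I, ∏ p ∈ Es, symmetrize f (halve (ε (Sum.inl p.1)) (w (Sum.inl p.1)))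
      (halve (ε (Sum.inr p.2)) (w (Sum.inr p.2))) =
    if ε = Sum.isRight then bipDensity Es f
    else if ε = Sum.isLeft then bipDensity Es (fun x y => f y x) else 0 := by
  have hae : ∀ᵐ w : A ⊕ B → I, ∏ p ∈ Es, symmetrize f (halve (ε (Sum.inl p.1)) (w (Sum.inl p.1)))
      (halve (ε (Sum.inr p.2)) (w (Sum.inr p.2))) = ∏ p ∈ Es,
        if ε (Sum.inl p.1) = ε (Sum.inr p.2) then 0
        else if ε (Sum.inr p.2) then f (w (Sum.inl p.1)) (w (Sum.inr p.2))
        else f (w (Sum.inr p.2)) (w (Sum.inl p.1)) := by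
    filter_upwards [ae_ne_one] with w hw
    exact Finset.prod_congr rfl fun p _ => symmetrize_halve_halve f (hw _) (hw _) _ _
  rw [integral_congr_ae hae]
  split_ifs with hR hL
  · subst hR; simp [bipDensity]
  · subst hL; simp [bipDensity]
  · obtain ⟨p, hp, hpε⟩ : ∃ p ∈ Es, ε (Sum.inl p.1) = ε (Sum.inr p.2) := by
      by_contra! h
      exact (eq_isRight_or_eq_isLeft_of_connected hconn h).elim hR hL
    refine (integral_congr_ae (ae_of_all _ fun w => ?_)).trans (integral_zero _ ℝ)
    exact Finset.prod_eq_zero hp (if_pos hpε)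

end bipGraph

/-- Let `G` be a connected bipartite graph with bipartition `(A,B)` and let `f` be
bounded measurable. Then the symmetrization `g` of `f` is symmetric and
`t_G(g) = 2^{-v(G)} (t_G(f) + t_G(fᵀ))`. -/
theorem density_symmetrize
    {A B : Type} [Fintype A] [Fintype B] (Es : Finset (A × B))
    (hconn : (bipGraph Es).Connected)
    (f : unitInterval → unitInterval → ℝ)
    (hmeas : Measurable (fun p : unitInterval × unitInterval => f p.1 p.2))
    (hbdd : ∃ C, ∀ a b, |f a b| ≤ C) :
    (∀ a b, symmetrize f a b = symmetrize f b a) ∧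
    bipDensity Es (symmetrize f) =
      ((1 : ℝ) / 2) ^ (Fintype.card A + Fintype.card B) *
        (bipDensity Es f + bipDensity Es (fun x y => f y x)) := by
  refine ⟨symmetrize_comm f, ?_⟩
  obtain ⟨C, hC⟩ := hbdd
  have hRL : (Sum.isRight : A ⊕ B → Bool) ≠ Sum.isLeft := by
    obtain ⟨v⟩ := hconn.nonempty
    intro h
    have := congrFun h v
    cases v <;> simp at this
  rw [bipDensity, volume_pi, integral_pi_eq_sum_of_measurePreserving
    measurePreserving_uncurry_halve (integrable_bipDensity_integrand Es (measurable_symmetrize f hmeas)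
      (abs_symmetrize_le f hC))]
  simp only [measureReal_pi_fairCoin_singleton, ← volume_pi, integral_prod_symmetrize_halve Es hconn f]
  rw [Fintype.sum_eq_add _ _ hRL (fun ε hε => by simp [hε.1, hε.2]), if_pos rfl, if_neg hRL.symm,
    if_pos rfl, Fintype.card_sum, mul_add]

end
end
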